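/- Forest expression for hitting times: for an n-state ergodic Markov chain with corresponding weighted digraph G, the mean first passage time satisfies m_ij = f_ij / q_j for i ≠ j and m_jj = q / q_j, where f_ij is the total weight of 2-tree in-forests of G having one tree containing i and the other tree converging to j, q_j is the total weight of spanning trees converging to j, and q = Σ_k q_k. -/

import Mathlib

open Finset Relation Matrix
open scoped Classical

/-- `T` is a (row-)stochastic matrix. -/
def IsStochastic {n : ℕ} (T : Matrix (Fin n) (Fin n) ℝ) : Prop :=
  (∀ i j, 0 ≤ T i j) ∧ ∀ i, ∑ j, T i j = 1

/-- Irreducibility of a Markov chain: every state leads to every state. -/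
def IsIrreducibleMC {n : ℕ} (T : Matrix (Fin n) (Fin n) ℝ) : Prop :=
  ∀ i j, Relation.TransGen (fun a b => 0 < T a b) i j

/-- `pi` is the stationary distribution of `T`. -/
def IsStationaryDist {n : ℕ} (T : Matrix (Fin n) (Fin n) ℝ) (pi : Fin n → ℝ) : Prop :=
  (∀ i, 0 ≤ pi i) ∧ (∑ i, pi i) = 1 ∧ ∀ j, ∑ i, pi i * T i j = pi j

/-- The step relation of a set `A` of arcs. -/
def arcStep {n : ℕ} (A : Finset (Fin n × Fin n)) (x y : Fin n) : Prop := (x, y) ∈ A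

/-- `A` is an in-forest: no loops, out-degree at most one, and no directed cycles;
equivalently, every weak component is a converging tree. -/
def IsInForest {n : ℕ} (A : Finset (Fin n × Fin n)) : Prop :=
  (∀ a ∈ A, a.1 ≠ a.2) ∧
  (∀ v : Fin n, (A.filter fun a => a.1 = v).card ≤ 1) ∧
  ∀ v : Fin n, ¬ Relation.TransGen (arcStep A) v v

/-- `j` is a root (no outgoing arc) of the arc set `A`. -/
def IsRootOf {n : ℕ} (A : Finset (Fin n × Fin n)) (j : Fin n) : Prop := ∀ a ∈ A, a.1 ≠ j

/-- In the in-forest `A`, vertex `i` belongs to the tree converging to the root `j`. -/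
def InTreeOf {n : ℕ} (A : Finset (Fin n × Fin n)) (i j : Fin n) : Prop :=
  IsRootOf A j ∧ Relation.ReflTransGen (arcStep A) i j

/-- The weight of an arc set: the product of its arc weights. -/
noncomputable def digraphWeight {n : ℕ} (W : Matrix (Fin n) (Fin n) ℝ)
    (A : Finset (Fin n × Fin n)) : ℝ :=
  ∏ a ∈ A, W a.1 a.2

/-- Total weight of the in-forests satisfying the predicate `P`. -/
noncomputable def forestWeight {n : ℕ} (W : Matrix (Fin n) (Fin n) ℝ)
    (P : Finset (Fin n × Fin n) → Prop) : ℝ :=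
  ∑ A : Finset (Fin n × Fin n), if IsInForest A ∧ P A then digraphWeight W A else 0

/-- `σ_k`: total weight of in-forests with `k` arcs. -/
noncomputable def sigmaF {n : ℕ} (W : Matrix (Fin n) (Fin n) ℝ) (k : ℕ) : ℝ :=
  forestWeight W fun A => A.card = k

/-- `q^(k)_{ij}`: total weight of in-forests with `k` arcs in which vertex `i`
belongs to the tree converging to `j`. -/
noncomputable def qF {n : ℕ} (W : Matrix (Fin n) (Fin n) ℝ) (k : ℕ) (i j : Fin n) : ℝ :=
  forestWeight W fun A => A.card = k ∧ InTreeOf A i j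

/-- `q_j`: total weight of spanning trees converging to `j`. -/
noncomputable def treeW {n : ℕ} (W : Matrix (Fin n) (Fin n) ℝ) (j : Fin n) : ℝ :=
  qF W (n - 1) j j

/-- `f_{ij}`: total weight of 2-tree in-forests having one tree containing `i`
and the other tree converging to `j`. -/
noncomputable def fF {n : ℕ} (W : Matrix (Fin n) (Fin n) ℝ) (i j : Fin n) : ℝ :=
  forestWeight W fun A =>
    A.card = n - 2 ∧ IsRootOf A j ∧ ¬ Relation.ReflTransGen (arcStep A) i j

/-- `X` is the group inverse of `L`. -/
def IsGroupInverse {n : ℕ} (L X : Matrix (Fin n) (Fin n) ℝ) : Prop :=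
  L * X * L = L ∧ X * L * X = X ∧ L * X = X * L

/-- `M` is the matrix of mean first passage times (with `M j j` the mean return time):
the standard first-step equations. -/
def IsMFPTMatrix {n : ℕ} (T M : Matrix (Fin n) (Fin n) ℝ) : Prop :=
  ∀ i j, M i j = 1 + ∑ k ∈ Finset.univ.filter (fun k => k ≠ j), T i k * M k j

/-- `m` is the hitting-time function with `m i i = 0`. -/
def IsHittingTime {n : ℕ} (T : Matrix (Fin n) (Fin n) ℝ) (m : Fin n → Fin n → ℝ) : Prop :=
  (∀ i, m i i = 0) ∧ ∀ i j, i ≠ j → m i j = 1 + ∑ k, T i k * m k j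

/-- The Laplacian matrix of the weight matrix `W`. -/
noncomputable def lap {n : ℕ} (W : Matrix (Fin n) (Fin n) ℝ) : Matrix (Fin n) (Fin n) ℝ :=
  Matrix.diagonal (fun i => ∑ j, W i j) - W

/-
The first-step equations of an irreducible chain have at most one solution: a positive maximum
of a solution of the homogeneous system propagates along positive arcs up to `j`, where the
solution is pinned to `0`. So it suffices that `f_ij / q_j` and `q / q_j` solve them, i.e. that
  `q = q_j + ∑ₖ t_jk f_kj`   and   `f_ij = q_j + ∑ₖ t_ik f_kj`  for `i ≠ j`
(the second after writing `f_ij = ∑ₖ t_ik f_ij`). Both rest on one bijection: adding the arc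
`(u, k)` to an in-forest in which `u` is a root and `k` does not reach `u` produces every in-forest
in which `u` is not a root exactly once. Used twice, it shows that replacing the parent of `u` by
another vertex is a weight-preserving involution; this matches the 2-tree forests in which `k` but
not `i` lies in the tree of `j` with those in which `i` but not `k` does, except for those where `i`
is a root, which become the spanning trees converging to `j`. Finally `q_j > 0`, since shortest
paths to `j` along positive arcs form such a tree.
-/

open Finset Relation

section Reachability

variable {n : ℕ}

abbrev Reaches (A : Finset (Fin n × Fin n)) (x y : Fin n) : Prop :=
  ReflTransGen (arcStep A) x y

variable {A B : Finset (Fin n × Fin n)} {u v x y : Fin n}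

theorem reaches_of_subset (h : A ⊆ B) (hxy : Reaches A x y) : Reaches B x y :=
  ReflTransGen.mono (fun _ _ hab => h hab) _ _ hxy

theorem not_isRootOf_iff : ¬ IsRootOf A v ↔ ∃ w, (v, w) ∈ A := by
  simp only [IsRootOf, not_forall, not_not]
  exact ⟨fun ⟨a, ha, hav⟩ => ⟨a.2, hav ▸ ha⟩, fun ⟨w, hw⟩ => ⟨_, hw, rfl⟩⟩

theorem IsRootOf.notMem (hu : IsRootOf A u) : (u, v) ∉ A := fun h => hu _ h rfl

theorem IsRootOf.eq_of_reaches (hu : IsRootOf A u) (h : Reaches A u x) : u = x := by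
  rcases h.cases_head with h | ⟨c, hc, -⟩
  · exact h
  · exact absurd rfl (hu _ hc)

theorem isRootOf_insert_iff : IsRootOf (insert (u, v) A) x ↔ u ≠ x ∧ IsRootOf A x := by
  simp [IsRootOf]

theorem reaches_insert (h : Reaches (insert (u, v) A) x y) :
    Reaches A x y ∨ Reaches A x u ∧ Reaches (insert (u, v) A) v y := by
  induction h using ReflTransGen.head_induction_on with
  | refl => exact .inl .refl
  | head hac hcy ih =>
    rcases mem_insert.1 hac with h | h
    · cases h
      exact .inr ⟨.refl, hcy⟩
    · exact ih.imp (ReflTransGen.head h) (And.imp_left (ReflTransGen.head h))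

theorem reaches_insert_iff (hx : ¬ Reaches A x u) :
    Reaches (insert (u, v) A) x y ↔ Reaches A x y :=
  ⟨fun h => (reaches_insert h).resolve_right fun h' => hx h'.1,
    reaches_of_subset (subset_insert _ _)⟩

theorem reaches_insert_self_iff : Reaches (insert (u, v) A) x u ↔ Reaches A x u :=
  ⟨fun h => (reaches_insert h).elim id And.left, reaches_of_subset (subset_insert _ _)⟩

theorem IsRootOf.reaches_insert_iff (hu : IsRootOf A u) (hv : ¬ Reaches A v u) :
    Reaches (insert (u, v) A) u y ↔ u = y ∨ Reaches A v y := by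
  rw [← _root_.reaches_insert_iff hv]
  refine ⟨fun h => ?_, ?_⟩
  · rcases h.cases_head with h | ⟨c, hc, hcy⟩
    · exact .inl h
    · rcases mem_insert.1 hc with hc | hc
      · cases hc
        exact .inr hcy
      · exact absurd rfl (hu _ hc)
  · rintro (rfl | h)
    · exact .refl
    · exact .head (mem_insert_self _ _) h

end Reachability

noncomputable def parent {n : ℕ} (A : Finset (Fin n × Fin n)) (v : Fin n) : Fin n :=
  if h : ∃ w, (v, w) ∈ A then h.choose else v

theorem mem_parent {n : ℕ} {A : Finset (Fin n × Fin n)} {v : Fin n} (h : ¬ IsRootOf A v) :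
    (v, parent A v) ∈ A := by
  have hex := not_isRootOf_iff.1 h
  rw [parent, dif_pos hex]
  exact hex.choose_spec

namespace IsInForest

variable {n : ℕ} {A B : Finset (Fin n × Fin n)} {u v w x y z : Fin n}

theorem mono (hA : IsInForest A) (h : B ⊆ A) : IsInForest B :=
  ⟨fun a ha => hA.1 a (h ha), fun v => (card_le_card (filter_subset_filter _ h)).trans (hA.2.1 v),
    fun v hv => hA.2.2 v (TransGen.mono (fun _ _ hab => h hab) _ _ hv)⟩

theorem eq_of_fst_eq (hA : IsInForest A) {a b : Fin n × Fin n} (ha : a ∈ A) (hb : b ∈ A)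
    (h : a.1 = b.1) : a = b :=
  card_le_one.1 (hA.2.1 a.1) a (mem_filter.2 ⟨ha, rfl⟩) b (mem_filter.2 ⟨hb, h.symm⟩)

theorem eq_of_mem (hA : IsInForest A) (hv : (u, v) ∈ A) (hw : (u, w) ∈ A) : v = w :=
  congrArg Prod.snd (hA.eq_of_fst_eq hv hw rfl)

theorem not_reaches_of_mem (hA : IsInForest A) (h : (u, v) ∈ A) : ¬ Reaches A v u :=
  fun hvu => hA.2.2 u (TransGen.head' h hvu)

theorem reaches_total (hA : IsInForest A) (hy : Reaches A x y) (hz : Reaches A x z) :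
    Reaches A y z ∨ Reaches A z y := by
  induction hy using ReflTransGen.head_induction_on with
  | refl => exact .inl hz
  | head hac hcy ih =>
    rcases hz.cases_head with rfl | ⟨d, had, hdz⟩
    · exact .inr (.head hac hcy)
    · exact ih (hA.eq_of_mem had hac ▸ hdz)

theorem not_reaches_of_reaches_root (hA : IsInForest A) (hv : IsRootOf A v) (huv : u ≠ v)
    (hu : ¬ Reaches A u v) (hx : Reaches A x v) : ¬ Reaches A x u := fun hxu =>
  (hA.reaches_total hxu hx).elim hu fun h => huv (hv.eq_of_reaches h).symm

protected theorem insert (hA : IsInForest A) (hu : IsRootOf A u) (hv : ¬ Reaches A v u) :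
    IsInForest (insert (u, v) A) := by
  refine ⟨fun a ha => ?_, fun w => card_le_one.2 fun a ha b hb => ?_, fun z hz => ?_⟩
  · rcases mem_insert.1 ha with rfl | ha
    · rintro (rfl : u = v)
      exact hv .refl
    · exact hA.1 a ha
  · simp only [mem_filter, mem_insert] at ha hb
    obtain ⟨rfl | ha, rfl⟩ := ha <;> obtain ⟨rfl | hb, hab⟩ := hb
    · rfl
    · exact absurd hab (hu b hb)
    · exact absurd hab.symm (hu a ha)
    · exact hA.eq_of_fst_eq ha hb hab.symm
  · obtain ⟨w, hzw, hwz⟩ := TransGen.head'_iff.1 hz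
    rcases mem_insert.1 hzw with h | h
    · cases h
      exact hv (reaches_insert_self_iff.1 hwz)
    · rcases reaches_insert hwz with h' | ⟨hwu, hvz⟩
      · exact hA.2.2 z (TransGen.head' h h')
      · exact hv (reaches_insert_self_iff.1
          (hvz.trans (reaches_of_subset (subset_insert _ _) (.head h hwu))))

theorem parent_eq (hA : IsInForest A) (h : (v, w) ∈ A) : parent A v = w :=
  hA.eq_of_mem (mem_parent (not_isRootOf_iff.2 ⟨w, h⟩)) h

theorem isRootOf_erase (hA : IsInForest A) (h : (v, w) ∈ A) : IsRootOf (A.erase (v, w)) v :=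
  fun _ ha hav => (mem_erase.1 ha).1 (hA.eq_of_fst_eq (mem_erase.1 ha).2 h hav)

theorem card_add_card_roots (hA : IsInForest A) :
    A.card + (univ.filter (IsRootOf A)).card = n := by
  have himage : A.image Prod.fst = univ.filter fun v => ¬ IsRootOf A v := by
    ext v
    simp only [mem_image, mem_filter, mem_univ, true_and, not_isRootOf_iff]
    exact ⟨fun ⟨a, ha, hav⟩ => ⟨a.2, hav ▸ ha⟩, fun ⟨w, hw⟩ => ⟨_, hw, rfl⟩⟩
  have hinj : Set.InjOn Prod.fst (A : Set (Fin n × Fin n)) :=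
    fun a ha b hb h => hA.eq_of_fst_eq ha hb h
  rw [← card_image_of_injOn hinj, himage, add_comm, card_filter_add_card_filter_not,
    card_univ, Fintype.card_fin]

theorem exists_isRootOf_reaches (hA : IsInForest A) (v : Fin n) :
    ∃ r, IsRootOf A r ∧ Reaches A v r := by
  let R : Fin n → Fin n → Prop := flip (TransGen (arcStep A))
  have : IsTrans (Fin n) R := ⟨fun _ _ _ h₁ h₂ => h₂.trans h₁⟩
  have : Std.Irrefl R := ⟨hA.2.2⟩
  obtain ⟨r, hvr, hmin⟩ := (Finite.wellFounded_of_trans_of_irrefl R).has_min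
    {w | Reaches A v w} ⟨v, .refl⟩
  refine ⟨r, fun a ha har => ?_, hvr⟩
  have hra : arcStep A r a.2 := har ▸ ha
  exact hmin a.2 (hvr.tail hra) (.single hra)

theorem eq_of_isRootOf (hA : IsInForest A) (hcard : A.card + 1 = n) (hu : IsRootOf A u)
    (hv : IsRootOf A v) : u = v := by
  have := hA.card_add_card_roots
  have hroots : (univ.filter (IsRootOf A)).card ≤ 1 := by omega
  exact card_le_one.1 hroots u (by simpa) v (by simpa)

theorem eq_or_eq_of_isRootOf (hA : IsInForest A) (hcard : A.card + 2 = n) (hu : IsRootOf A u)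
    (hv : IsRootOf A v) (huv : u ≠ v) (hw : IsRootOf A w) : w = u ∨ w = v := by
  have hsub : {u, v} ⊆ univ.filter (IsRootOf A) := by simp [insert_subset_iff, hu, hv]
  have := hA.card_add_card_roots
  have hroots := eq_of_subset_of_card_le hsub (by rw [card_pair huv]; omega)
  have hw' : w ∈ ({u, v} : Finset (Fin n)) := hroots ▸ mem_filter.2 ⟨mem_univ w, hw⟩
  simpa using hw'

end IsInForest

section ForestWeight

variable {n : ℕ} (W : Matrix (Fin n) (Fin n) ℝ)

theorem forestWeight_congr {P Q : Finset (Fin n × Fin n) → Prop}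
    (h : ∀ A, IsInForest A → (P A ↔ Q A)) : forestWeight W P = forestWeight W Q :=
  sum_congr rfl fun A _ => if_congr (and_congr_right (h A)) rfl rfl

theorem forestWeight_split (P Q : Finset (Fin n × Fin n) → Prop) :
    forestWeight W P =
      forestWeight W (fun A => P A ∧ Q A) + forestWeight W (fun A => P A ∧ ¬ Q A) := by
  simp only [forestWeight, ← sum_add_distrib]
  refine sum_congr rfl fun A _ => ?_
  by_cases hQ : Q A <;> simp [hQ]

theorem digraphWeight_le_forestWeight (hW : ∀ i j, 0 ≤ W i j) {P : Finset (Fin n × Fin n) → Prop}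
    {A : Finset (Fin n × Fin n)} (hA : IsInForest A) (hP : P A) :
    digraphWeight W A ≤ forestWeight W P := by
  have hnonneg : ∀ B, 0 ≤ if IsInForest B ∧ P B then digraphWeight W B else 0 := fun B => by
    split_ifs
    exacts [prod_nonneg fun a _ => hW a.1 a.2, le_rfl]
  calc digraphWeight W A = if IsInForest A ∧ P A then digraphWeight W A else 0 :=
        (if_pos ⟨hA, hP⟩).symm
    _ ≤ forestWeight W P := single_le_sum (fun B _ => hnonneg B) (mem_univ A)

theorem treeW_eq_forestWeight (j : Fin n) :
    treeW W j = forestWeight W fun A => A.card = n - 1 ∧ IsRootOf A j :=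
  forestWeight_congr W fun _ _ => and_congr_right fun _ => and_iff_left .refl

theorem sum_treeW (hn : 0 < n) : ∑ j, treeW W j = forestWeight W fun A => A.card = n - 1 := by
  simp only [treeW_eq_forestWeight, forestWeight]
  rw [sum_comm]
  refine sum_congr rfl fun A _ => ?_
  by_cases hA : IsInForest A ∧ A.card = n - 1
  · have hroot : (univ.filter (IsRootOf A)).card = 1 := by
      have := hA.1.card_add_card_roots
      omega
    simp only [hA, true_and, if_true]
    rw [← sum_filter, sum_const, hroot, one_smul]
  · simp only [hA, if_false]
    exact sum_eq_zero fun j _ => if_neg fun h => hA ⟨h.1, h.2.1⟩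

theorem fF_self (j : Fin n) : fF W j j = 0 :=
  sum_eq_zero fun _ _ => if_neg fun h => h.2.2.2 .refl

theorem sum_mul_forestWeight_insert (u : Fin n) (Q : Finset (Fin n × Fin n) → Prop) :
    ∑ k, W u k * forestWeight W (fun F => IsRootOf F u ∧ ¬ Reaches F k u ∧ Q (insert (u, k) F)) =
      forestWeight W (fun B => ¬ IsRootOf B u ∧ Q B) := by
  have hpairs : ∑ k, W u k * forestWeight W
      (fun F => IsRootOf F u ∧ ¬ Reaches F k u ∧ Q (insert (u, k) F)) =
      ∑ p ∈ univ.filter (fun p : Fin n × Finset (Fin n × Fin n) => IsInForest p.2 ∧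
        IsRootOf p.2 u ∧ ¬ Reaches p.2 p.1 u ∧ Q (insert (u, p.1) p.2)),
        W u p.1 * digraphWeight W p.2 := by
    simp only [sum_filter, Fintype.sum_prod_type, forestWeight, mul_sum, mul_ite, mul_zero]
  have hforests : forestWeight W (fun B => ¬ IsRootOf B u ∧ Q B) =
      ∑ B ∈ univ.filter (fun B => IsInForest B ∧ ¬ IsRootOf B u ∧ Q B), digraphWeight W B := by
    rw [forestWeight, sum_filter]
    congr!
  rw [hpairs, hforests]
  refine sum_nbij' (fun p => insert (u, p.1) p.2) (fun B => (parent B u, B.erase (u, parent B u)))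
    ?_ ?_ ?_ ?_ ?_
  · rintro ⟨k, F⟩ hp
    obtain ⟨hF, hu, hk, hQ⟩ := (mem_filter.1 hp).2
    exact mem_filter.2 ⟨mem_univ _, hF.insert hu hk, fun h => h _ (mem_insert_self _ _) rfl, hQ⟩
  · intro B hB
    obtain ⟨hB, hu, hQ⟩ := (mem_filter.1 hB).2
    have hmem := mem_parent hu
    refine mem_filter.2 ⟨mem_univ _, hB.mono (erase_subset _ _), hB.isRootOf_erase hmem,
      fun h => hB.not_reaches_of_mem hmem (reaches_of_subset (erase_subset _ _) h), ?_⟩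
    rwa [insert_erase hmem]
  · rintro ⟨k, F⟩ hp
    obtain ⟨hF, hu, hk, -⟩ := (mem_filter.1 hp).2
    rw [(hF.insert hu hk).parent_eq (mem_insert_self _ _), erase_insert hu.notMem]
  · intro B hB
    exact insert_erase (mem_parent (mem_filter.1 hB).2.2.1)
  · rintro ⟨k, F⟩ hp
    simp only [digraphWeight, prod_insert (mem_filter.1 hp).2.2.1.notMem]

theorem sum_mul_forestWeight_not_root (u : Fin n) (P : Fin n → Finset (Fin n × Fin n) → Prop) :
    ∑ k, W u k * forestWeight W (fun F => ¬ IsRootOf F u ∧ ¬ Reaches F k u ∧ P k F) =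
      ∑ k, ∑ p, W u k * W u p * forestWeight W (fun G => IsRootOf G u ∧ ¬ Reaches G p u ∧
        ¬ Reaches G k u ∧ P k (insert (u, p) G)) := by
  refine sum_congr rfl fun k _ => ?_
  rw [← sum_mul_forestWeight_insert W u (fun B => ¬ Reaches B k u ∧ P k B), mul_sum]
  refine sum_congr rfl fun p _ => ?_
  rw [mul_assoc, forestWeight_congr W fun G _ => by rw [reaches_insert_self_iff]]

/-- Replacing the parent `p` of `u` by `k` is a weight-preserving involution. -/
theorem sum_mul_forestWeight_swap (u : Fin n) (P Q : Fin n → Finset (Fin n × Fin n) → Prop)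
    (hPQ : ∀ G k p, IsInForest G → IsRootOf G u → ¬ Reaches G k u → ¬ Reaches G p u →
      (P k (insert (u, p) G) ↔ Q p (insert (u, k) G))) :
    ∑ k, W u k * forestWeight W (fun F => ¬ IsRootOf F u ∧ ¬ Reaches F k u ∧ P k F) =
      ∑ k, W u k * forestWeight W (fun F => ¬ IsRootOf F u ∧ ¬ Reaches F k u ∧ Q k F) := by
  rw [sum_mul_forestWeight_not_root, sum_mul_forestWeight_not_root, sum_comm]
  refine sum_congr rfl fun k _ => sum_congr rfl fun p _ => ?_
  rw [mul_comm (W u p)]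
  congr 1
  exact forestWeight_congr W fun G hG =>
    ⟨fun ⟨hu, hk, hp, h⟩ => ⟨hu, hp, hk, (hPQ G p k hG hu hp hk).1 h⟩,
      fun ⟨hu, hp, hk, h⟩ => ⟨hu, hk, hp, (hPQ G p k hG hu hp hk).2 h⟩⟩

end ForestWeight

section ForestIdentities

variable {n : ℕ} (W : Matrix (Fin n) (Fin n) ℝ)

theorem sum_treeW_eq_treeW_add_sum (hn : 2 ≤ n) (j : Fin n) :
    ∑ k, treeW W k = treeW W j + ∑ k, W j k * fF W k j := by
  rw [sum_treeW W (by omega), forestWeight_split W _ (IsRootOf · j), ← treeW_eq_forestWeight]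
  congr 1
  rw [forestWeight_congr W (Q := fun B => ¬ IsRootOf B j ∧ B.card = n - 1) fun _ _ => and_comm,
    ← sum_mul_forestWeight_insert]
  refine sum_congr rfl fun k _ => congrArg _ (forestWeight_congr W fun F _ => ?_)
  constructor
  · rintro ⟨hj, hk, hcard⟩
    rw [card_insert_of_notMem hj.notMem] at hcard
    exact ⟨by omega, hj, hk⟩
  · rintro ⟨hcard, hj, hk⟩
    exact ⟨hj, hk, by rw [card_insert_of_notMem hj.notMem]; omega⟩

theorem fF_sub_fF (i k j : Fin n) :
    fF W i j - fF W k j =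
      forestWeight W (fun F => F.card = n - 2 ∧ IsRootOf F j ∧ ¬ Reaches F i j ∧ Reaches F k j) -
      forestWeight W (fun F => F.card = n - 2 ∧ IsRootOf F j ∧ ¬ Reaches F k j ∧
        Reaches F i j) := by
  have hi := forestWeight_split W
    (fun F => F.card = n - 2 ∧ IsRootOf F j ∧ ¬ Reaches F i j) (fun F => Reaches F k j)
  have hk := forestWeight_split W
    (fun F => F.card = n - 2 ∧ IsRootOf F j ∧ ¬ Reaches F k j) (fun F => Reaches F i j)
  have hcommon : forestWeight W (fun F => (F.card = n - 2 ∧ IsRootOf F j ∧ ¬ Reaches F i j) ∧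
      ¬ Reaches F k j) = forestWeight W (fun F => (F.card = n - 2 ∧ IsRootOf F j ∧
      ¬ Reaches F k j) ∧ ¬ Reaches F i j) := forestWeight_congr W fun _ _ => by tauto
  simp only [and_assoc] at hi hk hcommon
  rw [fF, fF, hi, hk, hcommon]
  ring

theorem sum_mul_forestWeight_root_eq_treeW (hn : 2 ≤ n) {i j : Fin n} (hij : i ≠ j) :
    ∑ k, W i k * forestWeight W (fun F => (F.card = n - 2 ∧ IsRootOf F j ∧ ¬ Reaches F i j ∧
      Reaches F k j) ∧ IsRootOf F i) = treeW W j := by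
  have htrees : treeW W j =
      forestWeight W fun B => ¬ IsRootOf B i ∧ B.card = n - 1 ∧ IsRootOf B j := by
    rw [treeW_eq_forestWeight]
    exact forestWeight_congr W fun B hB => ⟨fun ⟨hcard, hj⟩ =>
      ⟨fun hi => hij (hB.eq_of_isRootOf (by omega) hi hj), hcard, hj⟩, fun ⟨_, h⟩ => h⟩
  rw [htrees, ← sum_mul_forestWeight_insert]
  refine sum_congr rfl fun k _ => congrArg _ (forestWeight_congr W fun F hF => ?_)
  constructor
  · rintro ⟨⟨hcard, hj, hij', hk⟩, hi⟩
    rw [card_insert_of_notMem hi.notMem, isRootOf_insert_iff]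
    exact ⟨hi, hF.not_reaches_of_reaches_root hj hij hij' hk, by omega, hij, hj⟩
  · rintro ⟨hi, hki, hcard, hj⟩
    rw [card_insert_of_notMem hi.notMem] at hcard
    rw [isRootOf_insert_iff] at hj
    obtain ⟨r, hr, hkr⟩ := hF.exists_isRootOf_reaches k
    obtain rfl : r = j := (hF.eq_or_eq_of_isRootOf (by omega) hi hj.2 hij hr).resolve_left
      (by rintro rfl; exact hki hkr)
    exact ⟨⟨by omega, hj.2, fun h => hij (hi.eq_of_reaches h), hkr⟩, hi⟩

theorem sum_mul_forestWeight_not_root_eq {i j : Fin n} (hij : i ≠ j) :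
    ∑ k, W i k * forestWeight W (fun F => (F.card = n - 2 ∧ IsRootOf F j ∧ ¬ Reaches F i j ∧
      Reaches F k j) ∧ ¬ IsRootOf F i) =
    ∑ k, W i k * forestWeight W (fun F => F.card = n - 2 ∧ IsRootOf F j ∧ ¬ Reaches F k j ∧
      Reaches F i j) := by
  have hL : ∀ k, forestWeight W (fun F => (F.card = n - 2 ∧ IsRootOf F j ∧ ¬ Reaches F i j ∧
      Reaches F k j) ∧ ¬ IsRootOf F i) = forestWeight W (fun F => ¬ IsRootOf F i ∧
      ¬ Reaches F k i ∧ F.card = n - 2 ∧ IsRootOf F j ∧ ¬ Reaches F i j ∧ Reaches F k j) :=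
    fun k => forestWeight_congr W fun F hF => ⟨fun ⟨h, hi⟩ =>
      ⟨hi, hF.not_reaches_of_reaches_root h.2.1 hij h.2.2.1 h.2.2.2, h⟩, fun ⟨hi, _, h⟩ => ⟨h, hi⟩⟩
  have hR : ∀ k, forestWeight W (fun F => F.card = n - 2 ∧ IsRootOf F j ∧ ¬ Reaches F k j ∧
      Reaches F i j) = forestWeight W (fun F => ¬ IsRootOf F i ∧ ¬ Reaches F k i ∧
      F.card = n - 2 ∧ IsRootOf F j ∧ ¬ Reaches F k j ∧ Reaches F i j) :=
    fun k => forestWeight_congr W fun F _ => ⟨fun h => ⟨fun hi => hij (hi.eq_of_reaches h.2.2.2),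
      fun hki => h.2.2.1 (hki.trans h.2.2.2), h⟩, fun h => h.2.2⟩
  simp only [hL, hR]
  refine sum_mul_forestWeight_swap W i _ _ fun G k p _ hi hk hp => ?_
  simp only [card_insert_of_notMem (hi.notMem (v := p)), card_insert_of_notMem (hi.notMem (v := k)),
    isRootOf_insert_iff, hi.reaches_insert_iff hp, hi.reaches_insert_iff hk, reaches_insert_iff hk,
    reaches_insert_iff hp, hij, false_or]

theorem fF_eq_treeW_add_sum (hn : 2 ≤ n) (hW : ∀ i, ∑ k, W i k = 1) {i j : Fin n} (hij : i ≠ j) :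
    fF W i j = treeW W j + ∑ k, W i k * fF W k j := by
  have hsplit : ∀ k, forestWeight W (fun F => F.card = n - 2 ∧ IsRootOf F j ∧ ¬ Reaches F i j ∧
      Reaches F k j) = forestWeight W (fun F => (F.card = n - 2 ∧ IsRootOf F j ∧
      ¬ Reaches F i j ∧ Reaches F k j) ∧ IsRootOf F i) + forestWeight W (fun F =>
      (F.card = n - 2 ∧ IsRootOf F j ∧ ¬ Reaches F i j ∧ Reaches F k j) ∧ ¬ IsRootOf F i) :=
    fun _ => forestWeight_split W _ _
  have key : ∑ k, W i k * (fF W i j - fF W k j) = treeW W j := by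
    simp only [fF_sub_fF, hsplit, mul_sub, mul_add, sum_sub_distrib, sum_add_distrib,
      sum_mul_forestWeight_root_eq_treeW W hn hij, sum_mul_forestWeight_not_root_eq W hij]
    ring
  simp only [mul_sub, sum_sub_distrib, ← sum_mul, hW, one_mul] at key
  linarith

end ForestIdentities

section Positivity

variable {α : Type*}

def ReachesIn (r : α → α → Prop) (j : α) : ℕ → α → Prop
  | 0, v => v = j
  | m + 1, v => ∃ w, r v w ∧ ReachesIn r j m w

theorem exists_rank_of_reflTransGen {r : α → α → Prop} {j : α} (h : ∀ v, ReflTransGen r v j) :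
    ∃ ρ : α → ℕ, ∀ v, v ≠ j → ∃ w, r v w ∧ ρ w < ρ v := by
  have hex : ∀ v, ∃ m, ReachesIn r j m v := fun v => by
    induction h v using ReflTransGen.head_induction_on with
    | refl => exact ⟨0, rfl⟩
    | head hvc _ ih =>
      obtain ⟨m, hm⟩ := ih
      exact ⟨m + 1, _, hvc, hm⟩
  refine ⟨fun v => Nat.find (hex v), fun v hv => ?_⟩
  have hspec := Nat.find_spec (hex v)
  obtain ⟨m, hm⟩ : ∃ m, Nat.find (hex v) = m + 1 :=
    Nat.exists_eq_succ_of_ne_zero fun h0 => hv (by rwa [h0] at hspec)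
  rw [hm] at hspec
  obtain ⟨w, hvw, hw⟩ := hspec
  exact ⟨w, hvw, (Nat.find_le hw).trans_lt (by simp only [hm]; omega)⟩

variable {n : ℕ}

theorem isInForest_image_of_rank {S : Finset (Fin n)} {g : Fin n → Fin n} {ρ : Fin n → ℕ}
    (hg : ∀ v ∈ S, ρ (g v) < ρ v) : IsInForest (S.image fun v => (v, g v)) := by
  have harc : ∀ a ∈ S.image (fun v => (v, g v)), a.2 = g a.1 ∧ ρ a.2 < ρ a.1 := by
    simp only [mem_image]
    rintro _ ⟨v, hv, rfl⟩
    exact ⟨rfl, hg v hv⟩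
  have hdesc : ∀ x y, TransGen (arcStep (S.image fun v => (v, g v))) x y → ρ y < ρ x := by
    intro x y hxy
    induction hxy with
    | single h => exact (harc _ h).2
    | tail _ h ih => exact (harc _ h).2.trans ih
  refine ⟨fun a ha h => (harc a ha).2.ne (h ▸ rfl), fun v => card_le_one.2 fun a ha b hb => ?_,
    fun v hv => (hdesc v v hv).false⟩
  rw [mem_filter] at ha hb
  exact Prod.ext (ha.2.trans hb.2.symm)
    ((harc a ha.1).1.trans ((ha.2.trans hb.2.symm) ▸ (harc b hb.1).1.symm))

theorem treeW_pos {W : Matrix (Fin n) (Fin n) ℝ} (hW : ∀ i j, 0 ≤ W i j)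
    (hirr : IsIrreducibleMC W) (j : Fin n) : 0 < treeW W j := by
  obtain ⟨ρ, hρ⟩ := exists_rank_of_reflTransGen fun v => (hirr v j).to_reflTransGen
  choose! g hg using hρ
  set A := (univ.erase j).image fun v => (v, g v)
  have harc : ∀ a ∈ A, a.1 ≠ j ∧ 0 < W a.1 a.2 := by
    simp only [A, mem_image]
    rintro _ ⟨v, hv, rfl⟩
    exact ⟨ne_of_mem_erase hv, (hg v (ne_of_mem_erase hv)).1⟩
  have hA : IsInForest A := isInForest_image_of_rank fun v hv => (hg v (ne_of_mem_erase hv)).2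
  have hcard : A.card = n - 1 := by
    rw [card_image_of_injective _ fun _ _ h => congrArg Prod.fst h, card_erase_of_mem (mem_univ _),
      card_univ, Fintype.card_fin]
  have hpos : 0 < digraphWeight W A := prod_pos fun a ha => (harc a ha).2
  rw [treeW_eq_forestWeight]
  exact hpos.trans_le (digraphWeight_le_forestWeight W hW hA ⟨hcard, fun a ha => (harc a ha).1⟩)

end Positivity

section FirstStep

variable {n : ℕ} {T : Matrix (Fin n) (Fin n) ℝ}

theorem le_zero_of_eq_sum_ne (hT : IsStochastic T) (hirr : IsIrreducibleMC T) {j : Fin n}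
    {e : Fin n → ℝ} (he : ∀ i, e i = ∑ k ∈ univ.filter (· ≠ j), T i k * e k) (i : Fin n) :
    e i ≤ 0 := by
  by_contra! hi
  obtain ⟨i₀, -, hmax⟩ := exists_max_image univ e ⟨i, mem_univ i⟩
  set c := e i₀
  have hc : 0 < c := hi.trans_le (hmax i (mem_univ i))
  set ê : Fin n → ℝ := fun k => if k = j then 0 else e k
  have hê : ∀ k, ê k ≤ c := fun k => by
    simp only [ê]
    split_ifs
    exacts [hc.le, hmax k (mem_univ k)]
  -- all terms are nonnegative since `ê ≤ c`, so they vanish where `e` is maximal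
  have hgap : ∀ v, ∑ k, T v k * (c - ê k) = c - e v := fun v => by
    simp only [mul_sub, sum_sub_distrib, ← sum_mul, hT.2 v, one_mul, he v, sum_filter, ê,
      mul_ite, mul_zero, ite_not]
  have hstep : ∀ v w, e v = c → 0 < T v w → w ≠ j ∧ e w = c := by
    intro v w hv hvw
    have hzero := (sum_eq_zero_iff_of_nonneg fun k _ => mul_nonneg (hT.1 v k)
      (sub_nonneg.2 (hê k))).1 ((hgap v).trans (by rw [hv, sub_self])) w (mem_univ w)
    have hw : ê w = c := by nlinarith [(mul_eq_zero.1 hzero).resolve_left hvw.ne']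
    by_cases hwj : w = j
    · simp only [ê, hwj, if_true] at hw
      exact absurd hw hc.ne
    · simpa [ê, hwj] using hw
  have hreach : ∀ v, ReflTransGen (fun a b => 0 < T a b) i₀ v → e v = c := by
    intro v h
    induction h with
    | refl => rfl
    | tail _ hbc ih => exact (hstep _ _ ih hbc).2
  obtain ⟨b, hb, hbj⟩ := TransGen.tail'_iff.1 (hirr i₀ j)
  exact (hstep b j (hreach b hb) hbj).1 rfl

theorem IsMFPTMatrix.unique (hT : IsStochastic T) (hirr : IsIrreducibleMC T)
    {M M' : Matrix (Fin n) (Fin n) ℝ} (hM : IsMFPTMatrix T M) (hM' : IsMFPTMatrix T M') :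
    M = M' := by
  have hle : ∀ {A B : Matrix (Fin n) (Fin n) ℝ}, IsMFPTMatrix T A → IsMFPTMatrix T B →
      ∀ i j, A i j - B i j ≤ 0 := fun {A B} hA hB i j =>
    le_zero_of_eq_sum_ne hT hirr (j := j) (e := fun i => A i j - B i j) (fun i => by
      simp only [mul_sub, sum_sub_distrib]
      linarith [hA i j, hB i j]) i
  ext i j
  linarith [hle hM hM' i j, hle hM' hM i j]

end FirstStep

noncomputable def forestMFPT {n : ℕ} (T : Matrix (Fin n) (Fin n) ℝ) : Matrix (Fin n) (Fin n) ℝ :=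
  Matrix.of fun i j => if i = j then (∑ k, treeW T k) / treeW T j else fF T i j / treeW T j

theorem isMFPTMatrix_forestMFPT {n : ℕ} (hn : 2 ≤ n) {T : Matrix (Fin n) (Fin n) ℝ}
    (hT : IsStochastic T) (hirr : IsIrreducibleMC T) : IsMFPTMatrix T (forestMFPT T) := by
  intro i j
  have hq : treeW T j ≠ 0 := (treeW_pos hT.1 hirr j).ne'
  have hsum : ∑ k ∈ univ.filter (· ≠ j), T i k * forestMFPT T k j =
      (∑ k, T i k * fF T k j) / treeW T j := by
    rw [sum_div, ← sum_filter_of_ne (s := univ) (p := (· ≠ j))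
      (f := fun k => T i k * fF T k j / treeW T j) fun k _ h (hkj : k = j) => h (by
        simp [hkj, fF_self])]
    refine sum_congr rfl fun k hk => ?_
    rw [forestMFPT, of_apply, if_neg (mem_filter.1 hk).2, mul_div_assoc]
  rw [hsum]
  by_cases hij : i = j
  · subst hij
    rw [forestMFPT, of_apply, if_pos rfl, sum_treeW_eq_treeW_add_sum T hn]
    field_simp
  · rw [forestMFPT, of_apply, if_neg hij, fF_eq_treeW_add_sum T hn hT.2 hij]
    field_simp

/-- forest expression for hitting times: `m_ij = f_ij / q_j` for `i ≠ j`
and `m_jj = q / q_j`. -/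
theorem stmt2 {n : ℕ} (hn : 2 ≤ n) (T : Matrix (Fin n) (Fin n) ℝ)
    (hst : IsStochastic T) (hirr : IsIrreducibleMC T)
    (M : Matrix (Fin n) (Fin n) ℝ) (hM : IsMFPTMatrix T M) :
    (∀ i j, i ≠ j → M i j = fF T i j / treeW T j) ∧
      ∀ j, M j j = (∑ k, treeW T k) / treeW T j := by
  obtain rfl : M = forestMFPT T := hM.unique hst hirr (isMFPTMatrix_forestMFPT hn hst hirr)
  exact ⟨fun i j hij => if_neg hij, fun j => if_pos rfl⟩
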